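/- arXiv:2009.03979 — 2 statements merged into one kernel-verified Lean document; each statement's English description precedes it below -/
import Mathlib

section
/- Let X be an n×p matrix with all entries in [0,1], and let X_R be the matrix obtained by replacing each row of X with its assigned exemplar row, where each row is within Euclidean distance r of its exemplar. Then for all i, j, |d(X(i,:), X(j,:))^2 − d(X_R(i,:), X_R(j,:))^2| ≤ 4√p · r. -/
/-!
With `a = d(Xᵢ, Xⱼ)` and `b = d(XRᵢ, XRⱼ)`, factor `a² - b² = (a + b)(a - b)`. Any two points
of the unit cube `[0,1]^p` are within `√p`, and exemplars are rows of `X`, so `a + b ≤ 2√p`;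
by the triangle inequality `|a - b| ≤ 2r`, since each endpoint moves by at most `r`.
-/

lemma EuclideanSpace.dist_le_sqrt_card_of_mem_Icc {ι : Type*} [Fintype ι]
    {u v : EuclideanSpace ℝ ι} (hu : ∀ k, u k ∈ Set.Icc (0 : ℝ) 1)
    (hv : ∀ k, v k ∈ Set.Icc (0 : ℝ) 1) :
    dist u v ≤ √(Fintype.card ι) := by
  rw [EuclideanSpace.dist_eq]
  gcongr
  calc ∑ k, dist (u k) (v k) ^ 2 ≤ ∑ _k : ι, (1 : ℝ) := by
        gcongr with k
        exact pow_le_one₀ dist_nonneg (Real.dist_le_of_mem_Icc_01 (hu k) (hv k))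
    _ = Fintype.card ι := by simp

lemma abs_dist_sq_sub_dist_sq_le {α : Type*} [PseudoMetricSpace α] (x y x' y' : α) :
    |dist x y ^ 2 - dist x' y' ^ 2| ≤ (dist x y + dist x' y') * (dist x x' + dist y y') := by
  rw [sq_sub_sq, abs_mul, abs_of_nonneg (by positivity)]
  gcongr
  exact dist_dist_dist_le x y x' y'

theorem row_sketch_sq_dist_error_general (n p : ℕ) (r : ℝ)
    (X XR : Fin n → EuclideanSpace ℝ (Fin p))
    (hX : ∀ i k, X i k ∈ Set.Icc (0 : ℝ) 1)
    (hrow : ∀ i, ∃ i', XR i = X i')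
    (hnear : ∀ i, dist (X i) (XR i) ≤ r) :
    ∀ i j, |dist (X i) (X j) ^ 2 - dist (XR i) (XR j) ^ 2| ≤ 4 * Real.sqrt p * r := by
  intro i j
  have hcube : ∀ i j, dist (X i) (X j) ≤ √p := fun i j => by
    simpa using EuclideanSpace.dist_le_sqrt_card_of_mem_Icc (hX i) (hX j)
  obtain ⟨i', hi'⟩ := hrow i
  obtain ⟨j', hj'⟩ := hrow j
  calc |dist (X i) (X j) ^ 2 - dist (XR i) (XR j) ^ 2|
      ≤ (dist (X i) (X j) + dist (XR i) (XR j)) * (dist (X i) (XR i) + dist (X j) (XR j)) :=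
        abs_dist_sq_sub_dist_sq_le _ _ _ _
    _ ≤ (√p + √p) * (r + r) := by
        gcongr
        exacts [hcube i j, hi' ▸ hj' ▸ hcube i' j', hnear i, hnear j]
    _ = 4 * √p * r := by ring

theorem row_sketch_sq_dist_error (n p : ℕ) (r : ℝ) (hr : 0 ≤ r)
    (X XR : Fin n → EuclideanSpace ℝ (Fin p))
    (hX : ∀ i k, X i k ∈ Set.Icc (0 : ℝ) 1)
    (hrow : ∀ i, ∃ i', XR i = X i')
    (hnear : ∀ i, dist (X i) (XR i) ≤ r) :
    ∀ i j, |dist (X i) (X j) ^ 2 - dist (XR i) (XR j) ^ 2| ≤ 4 * Real.sqrt p * r :=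
  row_sketch_sq_dist_error_general n p r X XR hX hrow hnear
end

section
/- Total row-sketch error bound: with n points in [0,1]^p, K(r) exemplars, and each point within distance r of its exemplar, the sum over all ordered pairs (i,j) of |d(x_i,x_j)² − d(e_i,e_j)²| is at most 4√p·r·(n − K(r))·(n − 1), where e_i is the exemplar of x_i. -/
/-!
Write `δᵢ = d(xᵢ, eᵢ)`. By the triangle inequality `|d(xᵢ,xⱼ) − d(eᵢ,eⱼ)| ≤ δᵢ + δⱼ`, and both
distances are at most the diameter `√p` of the unit cube, so each off-diagonal term is at most
`2√p (δᵢ + δⱼ)`; summed over ordered pairs `i ≠ j` this gives `4√p (n − 1) ∑ δᵢ`. Every exemplar is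
its own exemplar and contributes `δᵢ = 0`, so at most `n − K` of the `δᵢ` are nonzero, each `≤ r`.
-/

open Finset

lemma dist_le_sqrt_card_of_mem_unitCube {ι : Type*} [Fintype ι] {a b : EuclideanSpace ℝ ι}
    (ha : ∀ k, a k ∈ Set.Icc (0 : ℝ) 1) (hb : ∀ k, b k ∈ Set.Icc (0 : ℝ) 1) :
    dist a b ≤ √(Fintype.card ι) := by
  rw [EuclideanSpace.dist_eq]
  gcongr
  calc ∑ k, dist (a k) (b k) ^ 2 ≤ ∑ _k : ι, (1 : ℝ) := by
        gcongr with k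
        exact pow_le_one₀ dist_nonneg (Real.dist_le_of_mem_Icc_01 (ha k) (hb k))
    _ = Fintype.card ι := by simp

lemma abs_dist_sq_sub_dist_sq_le_s17 {α : Type*} [PseudoMetricSpace α] {a b a' b' : α} {D : ℝ}
    (h : dist a b ≤ D) (h' : dist a' b' ≤ D) :
    |dist a b ^ 2 - dist a' b' ^ 2| ≤ 2 * D * (dist a a' + dist b b') := by
  have hdiff : |dist a b - dist a' b'| ≤ dist a a' + dist b b' := dist_dist_dist_le a b a' b'
  rw [sq_sub_sq, abs_mul, abs_of_nonneg (by positivity : 0 ≤ dist a b + dist a' b')]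
  calc (dist a b + dist a' b') * |dist a b - dist a' b'|
      ≤ (D + D) * (dist a a' + dist b b') :=
        mul_le_mul (add_le_add h h') hdiff (abs_nonneg _) (by linarith [dist_nonneg.trans h])
    _ = 2 * D * (dist a a' + dist b b') := by ring

lemma sum_sum_ite_eq_zero_add {ι : Type*} [Fintype ι] [DecidableEq ι] (g : ι → ℝ) :
    ∑ i, ∑ j, (if i = j then 0 else g i + g j) = 2 * ((Fintype.card ι : ℝ) - 1) * ∑ i, g i := by
  have hdiag : ∀ i j, (if i = j then 0 else g i + g j)
      = g i + g j - if i = j then g i + g j else 0 := by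
    intro i j
    split_ifs <;> ring
  simp only [hdiag, sum_sub_distrib, sum_ite_eq, mem_univ, if_true, sum_add_distrib, sum_const,
    card_univ, nsmul_eq_mul, ← mul_sum]
  ring

section Exemplars

variable {ι α : Type*} [Fintype ι] (x e : ι → α)

lemma card_image_le_card_filter_eq [DecidableEq α]
    (hexemplar : ∀ i, ∃ j, e i = x j) (hfix : ∀ i, (∃ j, x i = e j) → e i = x i) :
    (univ.image e).card ≤ (univ.filter fun i => e i = x i).card := by
  calc (univ.image e).card ≤ ((univ.filter fun i => e i = x i).image x).card := by
        refine card_le_card fun v hv => ?_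
        obtain ⟨i, -, rfl⟩ := mem_image.mp hv
        obtain ⟨j, hj⟩ := hexemplar i
        exact mem_image.mpr ⟨j, mem_filter.mpr ⟨mem_univ j, hfix j ⟨i, hj.symm⟩⟩, hj.symm⟩
    _ ≤ _ := card_image_le

lemma sum_dist_exemplar_le [PseudoMetricSpace α] [DecidableEq α] {r : ℝ} (hr : 0 ≤ r)
    (hexemplar : ∀ i, ∃ j, e i = x j) (hnear : ∀ i, dist (x i) (e i) ≤ r)
    (hfix : ∀ i, (∃ j, x i = e j) → e i = x i) :
    ∑ i, dist (x i) (e i) ≤ ((Fintype.card ι : ℝ) - (univ.image e).card) * r := by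
  set F := univ.filter fun i => e i = x i
  set M := univ.filter fun i => ¬ e i = x i
  have hcardM : (M.card : ℝ) = Fintype.card ι - F.card := by
    rw [eq_sub_iff_add_eq, ← Nat.cast_add, add_comm, card_filter_add_card_filter_not, card_univ]
  have hcardF := card_image_le_card_filter_eq x e hexemplar hfix
  rw [← sum_filter_add_sum_filter_not univ fun i => e i = x i,
    sum_eq_zero fun i hi => by rw [(mem_filter.mp hi).2, dist_self], zero_add]
  calc ∑ i ∈ M, dist (x i) (e i) ≤ M.card • r := sum_le_card_nsmul _ _ _ fun i _ => hnear i
    _ ≤ _ := by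
      rw [nsmul_eq_mul, hcardM]
      gcongr

end Exemplars

open scoped Classical
theorem total_row_sketch_error (n p : ℕ) (r : ℝ) (hr : 0 ≤ r)
    (x e : Fin n → EuclideanSpace ℝ (Fin p))
    (hx : ∀ i k, x i k ∈ Set.Icc (0 : ℝ) 1)
    (hexemplar : ∀ i, ∃ j, e i = x j)
    (hnear : ∀ i, dist (x i) (e i) ≤ r)
    (hfix : ∀ i, (∃ j, x i = e j) → e i = x i)
    (K : ℕ) (hK : K = (Finset.univ.image e).card) :
    ∑ i : Fin n, ∑ j : Fin n, |dist (x i) (x j) ^ 2 - dist (e i) (e j) ^ 2| ≤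
      4 * Real.sqrt p * r * ((n : ℝ) - K) * ((n : ℝ) - 1) := by
  subst hK
  obtain rfl | hn := Nat.eq_zero_or_pos n
  · simp
  have he : ∀ i k, e i k ∈ Set.Icc (0 : ℝ) 1 := fun i =>
    (hexemplar i).elim fun j hj => hj ▸ hx j
  have hdiam {a b : EuclideanSpace ℝ (Fin p)} (ha : ∀ k, a k ∈ Set.Icc (0 : ℝ) 1)
      (hb : ∀ k, b k ∈ Set.Icc (0 : ℝ) 1) : dist a b ≤ √p := by
    simpa using dist_le_sqrt_card_of_mem_unitCube ha hb
  have hS := sum_dist_exemplar_le x e hr hexemplar hnear hfix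
  rw [Fintype.card_fin] at hS
  have hn1 : (1 : ℝ) ≤ n := by exact_mod_cast hn
  calc ∑ i, ∑ j, |dist (x i) (x j) ^ 2 - dist (e i) (e j) ^ 2|
      ≤ ∑ i, ∑ j, 2 * √p * (if i = j then 0 else dist (x i) (e i) + dist (x j) (e j)) := by
        gcongr with i _ j _
        split_ifs with hij
        · simp [hij]
        · exact abs_dist_sq_sub_dist_sq_le_s17 (hdiam (hx i) (hx j)) (hdiam (he i) (he j))
    _ = 2 * √p * (2 * ((n : ℝ) - 1) * ∑ i, dist (x i) (e i)) := by
        simp only [← Finset.mul_sum, sum_sum_ite_eq_zero_add, Fintype.card_fin]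
    _ ≤ 2 * √p * (2 * ((n : ℝ) - 1) * (((n : ℝ) - (univ.image e).card) * r)) := by
        gcongr
    _ = 4 * √p * r * ((n : ℝ) - (univ.image e).card) * ((n : ℝ) - 1) := by ring
end
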